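/- arXiv:2604.20184 — 5 statements merged into one kernel-verified Lean document; each statement's English description precedes it below -/
import Mathlib

section
/- A subgroup of index k in a free group of rank n is free of rank 1 + k(n-1). -/
/-!
Let `F` be free on `n` generators and `H ≤ F` of index `k`. The action groupoid of `F` on the
`k` cosets `F ⧸ H` is a free groupoid whose generating quiver has `k` vertices and `k * n`
arrows (one for each coset and generator), and `H` is its vertex group at the trivial coset. The
vertex group of a connected free groupoid is free on the generating arrows outside a spanning
tree; a spanning tree on `k` vertices has `k - 1` arrows, which leaves `k * n - (k - 1)`
free generators.
-/

open CategoryTheory Quiver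

universe u v

namespace Quiver.Arborescence

variable {W : Type*} [Quiver W] [Arborescence W]

lemma default_eq_cons {a b : W} (e : a ⟶ b) :
    (default : Path (Quiver.root W) b) = (default : Path (Quiver.root W) a).cons e :=
  Subsingleton.elim _ _

lemma ne_root_of_hom {a b : W} (e : a ⟶ b) : b ≠ Quiver.root W := by
  rintro rfl
  exact Path.nil_ne_cons default e (Subsingleton.elim _ _)

lemma eq_and_heq_of_hom {a a' b : W} (e : a ⟶ b) (e' : a' ⟶ b) : a = a' ∧ e ≍ e' := by
  have h := (default_eq_cons e).symm.trans (default_eq_cons e')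
  exact ⟨Path.obj_eq_of_cons_eq_cons h, Path.hom_heq_of_cons_eq_cons h⟩

lemma exists_hom_of_ne_root {b : W} (hb : b ≠ Quiver.root W) : ∃ a, Nonempty (a ⟶ b) := by
  cases h : (default : Path (Quiver.root W) b) with
  | nil => exact absurd rfl hb
  | cons _ e => exact ⟨_, ⟨e⟩⟩

lemma isEmpty_hom_of_hom {a b : W} (e : a ⟶ b) : IsEmpty (b ⟶ a) := by
  refine ⟨fun f => ?_⟩
  have h := congrArg Path.length
    ((default_eq_cons e).trans (congrArg (·.cons e) (default_eq_cons f)))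
  simp only [Path.length_cons] at h
  omega

noncomputable def homEquivNeRoot : (Σ a b : W, a ⟶ b) ≃ {b : W // b ≠ Quiver.root W} :=
  Equiv.ofBijective (fun x => ⟨x.2.1, ne_root_of_hom x.2.2⟩) <| by
    refine ⟨fun ⟨a, b, e⟩ ⟨a', b', e'⟩ h => ?_, fun ⟨b, hb⟩ => ?_⟩
    · obtain rfl : b = b' := congrArg Subtype.val h
      obtain ⟨rfl, he⟩ := eq_and_heq_of_hom e e'
      cases he
      rfl
    · obtain ⟨a, ⟨e⟩⟩ := exists_hom_of_ne_root hb
      exact ⟨⟨a, b, e⟩, rfl⟩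

lemma card_sigma_hom_add_one [Finite W] : Nat.card (Σ a b : W, a ⟶ b) + 1 = Nat.card W := by
  rw [Nat.card_congr homEquivNeRoot, ← Set.ncard_singleton (Quiver.root W),
    ← Set.ncard_add_ncard_compl {Quiver.root W}, add_comm]
  rfl

end Quiver.Arborescence

namespace Quiver

variable {V : Type u} [Quiver.{v} V] (T : WideSubquiver (Symmetrify V)) [Arborescence T]

/-- Injective because an arborescence never contains an arrow together with its reversal. -/
noncomputable def sigmaHomEquivSymmetrify :
    (Σ a b : T, a ⟶ b) ≃ wideSubquiverEquivSetTotal (wideSubquiverSymmetrify T) :=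
  Equiv.ofBijective
    (fun
      | ⟨a, b, ⟨.inl e, h⟩⟩ => ⟨⟨a, b, e⟩, .inl h⟩
      | ⟨a, b, ⟨.inr e, h⟩⟩ => ⟨⟨b, a, e⟩, .inr h⟩) <| by
    refine ⟨?_, fun ⟨⟨a, b, e⟩, h⟩ => h.elim (fun h => ⟨⟨a, b, ⟨.inl e, h⟩⟩, rfl⟩)
      fun h => ⟨⟨b, a, ⟨.inr e, h⟩⟩, rfl⟩⟩
    rintro ⟨a, b, ⟨e | e, he⟩⟩ ⟨a', b', ⟨e' | e', he'⟩⟩ h <;>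
      obtain ⟨rfl, rfl, ⟨⟩⟩ := Total.ext_iff.mp (congrArg Subtype.val h)
    · rfl
    · have f : (a : T) ⟶ b := ⟨.inl e, he⟩
      exact (Arborescence.isEmpty_hom_of_hom f).elim ⟨.inr e, he'⟩
    · have f : (a : T) ⟶ b := ⟨.inr e, he⟩
      exact (Arborescence.isEmpty_hom_of_hom f).elim ⟨.inl e, he'⟩
    · rfl

end Quiver

namespace IsFreeGroupoid.SpanningTree

variable {G : Type u} [Groupoid.{u} G] [IsFreeGroupoid G]
  (T : WideSubquiver (Symmetrify <| Generators G)) [Arborescence T]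

/-- The library states `loopOfHom` in `End` of a private copy of this object, which is only
definitionally equal to it: hence the `change`s and `erw`s below. -/
def treeRoot : G := root T

section

variable {T} {X : Type u} [Group X] {F : G ⥤ CategoryTheory.SingleObj X}
  (hF : ∀ a b (e : a ⟶ b), e ∈ wideSubquiverSymmetrify T a b → F.map (of e) = 1)
include hF

lemma map_homOfPath_eq_one {a : G} (p : Path (root T) a) : F.map (homOfPath T p) = 1 := by
  induction p with
  | nil => exact F.map_id _
  | cons p e ih =>
    change F.map (homOfPath T p ≫ _) = 1
    rw [F.map_comp, SingleObj.comp_as_mul, ih, mul_one]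
    rcases e with ⟨e | e, eT⟩
    · exact hF _ _ e (Or.inl eT)
    · rw [F.map_inv, SingleObj.inv_as_inv, inv_eq_one]
      exact hF _ _ e (Or.inr eT)

lemma map_loopOfHom {x y : G} (q : x ⟶ y) : F.map (loopOfHom T q) = F.map q := by
  simp only [loopOfHom, treeHom, Functor.map_comp, Functor.map_inv, SingleObj.comp_as_mul,
    SingleObj.inv_as_inv, map_homOfPath_eq_one hF, inv_one, mul_one, one_mul]

end

lemma loopOfHom_of_end (x : End (treeRoot T)) : loopOfHom T x = x := by
  have h : treeHom T (treeRoot T) = 𝟙 _ := treeHom_root T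
  simp only [loopOfHom, h]
  erw [IsIso.inv_id, Category.id_comp, Category.comp_id]

open scoped Classical in
/-- `IsFreeGroupoid.SpanningTree.endIsFree` with its basis made explicit, so that the rank can be
counted. -/
noncomputable def endBasis :
    FreeGroupBasis ((wideSubquiverEquivSetTotal (wideSubquiverSymmetrify T))ᶜ :
      Set (Total (Generators G))) (End (treeRoot T)) :=
  FreeGroupBasis.ofUniqueLift _ (fun e => loopOfHom T (of e.val.hom)) fun {X} _ f => by
    let f' : Labelling (Generators G) X := fun a b e =>
      if h : e ∈ wideSubquiverSymmetrify T a b then 1 else f ⟨⟨a, b, e⟩, h⟩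
    obtain ⟨F, hF, uF⟩ := unique_lift f'
    have hF_tree : ∀ a b (e : a ⟶ b), e ∈ wideSubquiverSymmetrify T a b → F.map (of e) = 1 :=
      fun a b e h => (hF a b e).trans (dif_pos h)
    refine ⟨F.mapEnd _, fun ⟨⟨a, b, e⟩, h⟩ => ?_, fun E hE => ?_⟩
    · exact (map_loopOfHom hF_tree (of e)).trans ((hF a b e).trans (dif_neg h))
    · have hEF : functorOfMonoidHom T E = F := by
        refine uF _ fun a b e => ?_
        change E (loopOfHom T _) = dite _ _ _
        split_ifs with h
        · rw [loopOfHom_eq_id T e h]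
          exact E.map_one
        · exact hE ⟨⟨a, b, e⟩, h⟩
      ext x
      change E x = F.map x
      rw [← hEF]
      change E x = E (loopOfHom T x)
      rw [loopOfHom_of_end]

end IsFreeGroupoid.SpanningTree

namespace IsFreeGroupoid

theorem nonempty_end_mulEquiv_freeGroup {G : Type u} [Groupoid.{u} G] [IsFreeGroupoid G]
    [IsConnected G] [Finite G] [Finite (Total (Generators G))] (r : G) {m : ℕ}
    (hm : m + Nat.card G = Nat.card (Total (Generators G)) + 1) :
    Nonempty (End r ≃* FreeGroup (Fin m)) := by
  let r' : Symmetrify (Generators G) := r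
  have : RootedConnected r' := generators_connected G r
  let T := geodesicSubtree r'
  let S := wideSubquiverEquivSetTotal (wideSubquiverSymmetrify T)
  have hS : S.ncard + 1 = Nat.card G := by
    have : Finite T := inferInstanceAs (Finite G)
    rw [← Nat.card_coe_set_eq, ← Nat.card_congr (sigmaHomEquivSymmetrify T)]
    exact Arborescence.card_sigma_hom_add_one
  have hSc : Nat.card ↥Sᶜ = m := by
    have := Set.ncard_add_ncard_compl S
    rw [Nat.card_coe_set_eq]
    omega
  exact ⟨((SpanningTree.endBasis T).reindex ((Finite.equivFin _).trans (finCongr hSc))).repr⟩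

end IsFreeGroupoid

namespace CategoryTheory.ActionCategory

variable (G A : Type u) [Group G] [IsFreeGroup G] [MulAction G A]

noncomputable def totalGeneratorsEquiv :
    Total (IsFreeGroupoid.Generators (ActionCategory G A)) ≃ A × IsFreeGroup.Generators G where
  toFun t := (ActionCategory.back (M := G) t.left, t.hom.val)
  invFun p := ⟨objEquiv G A p.1, objEquiv G A (IsFreeGroup.of p.2 • p.1), ⟨p.2, rfl⟩⟩
  left_inv := by
    rintro ⟨⟨⟨⟩, (a : A)⟩, ⟨⟨⟩, (c : A)⟩, ⟨i, hi⟩⟩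
    obtain rfl : IsFreeGroup.of i • a = c := hi
    rfl
  right_inv _ := rfl

end CategoryTheory.ActionCategory

theorem Subgroup.nonempty_mulEquiv_freeGroup_of_index {G : Type u} [Group G] [IsFreeGroup G]
    [Finite (IsFreeGroup.Generators G)] (H : Subgroup G) [H.FiniteIndex] {m : ℕ}
    (hm : m + H.index = H.index * Nat.card (IsFreeGroup.Generators G) + 1) :
    Nonempty (H ≃* FreeGroup (Fin m)) := by
  have : Finite (ActionCategory G (G ⧸ H)) :=
    Finite.of_equiv _ (ActionCategory.objEquiv G (G ⧸ H))
  have : Finite (Total (IsFreeGroupoid.Generators (ActionCategory G (G ⧸ H)))) :=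
    Finite.of_equiv _ (ActionCategory.totalGeneratorsEquiv G (G ⧸ H)).symm
  -- the library instance is for the category structure, not the one of the groupoid
  have : @IsConnected (ActionCategory G (G ⧸ H)) Groupoid.toCategory :=
    inferInstanceAs (IsConnected (ActionCategory G (G ⧸ H)))
  have hV : Nat.card (ActionCategory G (G ⧸ H)) = H.index :=
    (Nat.card_congr (ActionCategory.objEquiv G (G ⧸ H)).symm).trans rfl
  have hE : Nat.card (Total (IsFreeGroupoid.Generators (ActionCategory G (G ⧸ H)))) =
      H.index * Nat.card (IsFreeGroup.Generators G) := by
    rw [Nat.card_congr (ActionCategory.totalGeneratorsEquiv G (G ⧸ H)), Nat.card_prod]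
    rfl
  obtain ⟨e⟩ := IsFreeGroupoid.nonempty_end_mulEquiv_freeGroup
    (ActionCategory.objEquiv G (G ⧸ H) (1 : G)) (by rw [hV, hE]; exact hm)
  exact ⟨(ActionCategory.endMulEquivSubgroup H).symm.trans e⟩

/-- Nielsen–Schreier index formula: a subgroup of index `k` in a free group of
rank `n` is free of rank `1 + k * (n - 1)`. -/
theorem nielsen_schreier_index_formula (n k : ℕ) (hn : 0 < n) (hk : 0 < k)
    (H : Subgroup (FreeGroup (Fin n))) (hH : H.index = k) :
    Nonempty (H ≃* FreeGroup (Fin (1 + k * (n - 1)))) := by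
  have : H.FiniteIndex := ⟨by omega⟩
  let e := Equiv.ofFreeGroupEquiv (IsFreeGroup.toFreeGroup (FreeGroup (Fin n))).symm
  have : Finite (IsFreeGroup.Generators (FreeGroup (Fin n))) := Finite.of_equiv _ e.symm
  apply H.nonempty_mulEquiv_freeGroup_of_index
  rw [hH, Nat.card_congr e, Nat.card_fin]
  obtain ⟨n, rfl⟩ := Nat.exists_eq_add_of_lt hn
  simp only [zero_add, Nat.add_sub_cancel]
  ring
end

section
/- Let Γ be a finite simple connected graph that is not complete. Then there exists a vertex v of Γ that is essential (i.e., its closed star N(v) is not properly contained in the closed star of any other vertex) and such that the closed star N(v) is not a complete graph. -/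
/-!
If every closed star is a clique, adjacency is transitive on distinct vertices, so in a connected
graph any two distinct vertices are adjacent. Hence a connected non-complete graph has a vertex
whose closed star is not a clique. Not being a clique passes to supersets, so a vertex whose
closed star is maximal among those non-clique closed stars is essential.
-/

namespace SimpleGraph

variable {V : Type*} (G : SimpleGraph V)

def closedNeighborSet (v : V) : Set V := insert v (G.neighborSet v)

variable {G}

lemma Walk.eq_or_adj_of_forall_isClique_closedNeighborSet
    (h : ∀ v, G.IsClique (G.closedNeighborSet v)) {u v : V} (p : G.Walk u v) :
    u = v ∨ G.Adj u v := by
  induction p with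
  | nil => exact .inl rfl
  | @cons u w v huw _ ih =>
    rcases ih with rfl | hwv
    · exact .inr huw
    · by_cases huv : u = v
      · exact .inl huv
      · exact .inr <| h w (Set.mem_insert_of_mem _ huw.symm) (Set.mem_insert_of_mem _ hwv) huv

lemma Connected.exists_not_isClique_closedNeighborSet (hG : G.Connected) (hne : G ≠ ⊤) :
    ∃ v, ¬ G.IsClique (G.closedNeighborSet v) := by
  by_contra! h
  refine hne (isClique_univ.mp fun u _ v _ huv => ?_)
  exact ((hG u v).some.eq_or_adj_of_forall_isClique_closedNeighborSet h).resolve_left huv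

end SimpleGraph

open SimpleGraph in
/-- In a finite simple connected graph that is not complete, there is an essential
vertex whose closed star is not complete. -/
theorem exists_essential_vertex_with_noncomplete_star
    {V : Type*} [Fintype V] (G : SimpleGraph V) (hconn : G.Connected)
    (hnc : ¬ ∀ u v : V, u ≠ v → G.Adj u v) :
    ∃ v : V,
      (¬ ∃ w : V, w ≠ v ∧ insert v (G.neighborSet v) ⊂ insert w (G.neighborSet w)) ∧
      ¬ (∀ u w : V, u ∈ insert v (G.neighborSet v) → w ∈ insert v (G.neighborSet v) →
          u ≠ w → G.Adj u w) := by
  have hne : G ≠ ⊤ := by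
    rintro rfl
    exact hnc fun _ _ => top_adj _ _ |>.mpr
  obtain ⟨v₀, hv₀⟩ := hconn.exists_not_isClique_closedNeighborSet hne
  obtain ⟨v, hv, hmax⟩ := Set.toFinite {v | ¬ G.IsClique (G.closedNeighborSet v)}
    |>.exists_maximalFor G.closedNeighborSet _ ⟨v₀, hv₀⟩
  refine ⟨v, ?_, fun hclique => hv fun u hu w hw huw => hclique u w hu hw huw⟩
  rintro ⟨w, -, hvw⟩
  have hw : ¬ G.IsClique (G.closedNeighborSet w) := fun hclique => hv (hclique.subset hvw.subset)
  exact hvw.not_subset (hmax hw hvw.subset)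
end

section
/- Let Γ be a finite simple connected graph and v an essential vertex whose closed star N(v) is a complete subgraph. Then N(v) equals the whole vertex set of Γ. -/
/-!
Since `N(v) ≠ V` and `Γ` is connected, some edge `p q` leaves `N(v)`, with `p ∈ N(v)` and
`q ∉ N(v)`. As `N(v)` is a clique containing `p`, it lies in `N(p)`, and `q ∈ N(p) \ N(v)`
makes the inclusion strict, so `v` is not essential.
-/

namespace SimpleGraph

variable {V : Type*} {G : SimpleGraph V}

theorem subset_insert_neighborSet_of_isClique {s : Set V} (hs : G.IsClique s) {p : V}
    (hp : p ∈ s) : s ⊆ insert p (G.neighborSet p) := fun u hu => by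
  rcases eq_or_ne p u with rfl | hpu
  · exact Set.mem_insert p _
  · exact Set.mem_insert_of_mem p (hs hp hu hpu)

theorem ssubset_insert_neighborSet_of_isClique {v p q : V}
    (hclique : G.IsClique (insert v (G.neighborSet v))) (hp : p ∈ insert v (G.neighborSet v))
    (hq : q ∉ insert v (G.neighborSet v)) (hpq : G.Adj p q) :
    p ≠ v ∧ insert v (G.neighborSet v) ⊂ insert p (G.neighborSet p) := by
  have hq_nbr : q ∈ insert p (G.neighborSet p) := Set.mem_insert_of_mem p hpq
  refine ⟨?_, subset_insert_neighborSet_of_isClique hclique hp, fun hsub => hq (hsub hq_nbr)⟩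
  rintro rfl
  exact hq hq_nbr

end SimpleGraph

theorem closedStar_eq_univ_of_essential_complete_general
    {V : Type*} (G : SimpleGraph V) (hconn : G.Connected) (v : V)
    (hess : ¬ ∃ w : V, w ≠ v ∧ insert v (G.neighborSet v) ⊂ insert w (G.neighborSet w))
    (hcomplete : ∀ u w : V, u ∈ insert v (G.neighborSet v) → w ∈ insert v (G.neighborSet v) →
      u ≠ w → G.Adj u w) :
    insert v (G.neighborSet v) = (Set.univ : Set V) := by
  refine Set.eq_univ_of_forall fun b => by_contra fun hb => hess ?_
  obtain ⟨d, -, hp, hq⟩ :=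
    (hconn.preconnected v b).some.exists_boundary_dart _ (Set.mem_insert v _) hb
  exact ⟨d.fst, SimpleGraph.ssubset_insert_neighborSet_of_isClique
    (fun u hu w hw => hcomplete u w hu hw) hp hq d.adj⟩

/-- If `v` is an essential vertex of a finite simple connected graph whose closed star
is complete, then the closed star of `v` is the whole vertex set. -/
theorem closedStar_eq_univ_of_essential_complete
    {V : Type*} [Fintype V] (G : SimpleGraph V) (hconn : G.Connected) (v : V)
    (hess : ¬ ∃ w : V, w ≠ v ∧ insert v (G.neighborSet v) ⊂ insert w (G.neighborSet w))
    (hcomplete : ∀ u w : V, u ∈ insert v (G.neighborSet v) → w ∈ insert v (G.neighborSet v) →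
      u ≠ w → G.Adj u w) :
    insert v (G.neighborSet v) = (Set.univ : Set V) :=
  closedStar_eq_univ_of_essential_complete_general G hconn v hess hcomplete
end

section
/- Let Γ be a finite simple connected graph with at least two vertices. Define a graph Γ' whose vertices are the essential vertices of Γ, with two essential vertices u, w joined by an edge in Γ' when N(u) ∩ N(w) ≠ ∅ (intersection of closed stars in Γ). Then Γ' is connected. -/
/-!
Cover every closed star of Γ by the closed star of an essential vertex (take a maximal closed
star above it). Along a walk x₀ x₁ … xₙ of Γ, the essential stars chosen over consecutive
vertices xₖ, xₖ₊₁ both contain xₖ, so they are equal or adjacent in Γ'; hence any two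
essential vertices are joined in Γ'.
-/

open SimpleGraph

lemma exists_superset_not_ssubset {ι α : Type*} [Finite ι] (f : ι → Set α) (i : ι) :
    ∃ e, (¬ ∃ x, x ≠ e ∧ f e ⊂ f x) ∧ f i ⊆ f e := by
  obtain ⟨_, hle, ⟨e, rfl⟩, hmax⟩ := (Set.finite_range f).exists_le_maximal (Set.mem_range_self i)
  refine ⟨e, fun ⟨x, _, hlt⟩ => ?_, hle⟩
  exact hlt.not_ge (hmax (Set.mem_range_self x) hlt.le)

def intersectionGraph {ι V : Type*} (f : ι → Set V) : SimpleGraph ι :=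
  fromRel fun i j => (f i ∩ f j).Nonempty

namespace intersectionGraph

variable {ι V : Type*} {f : ι → Set V}

lemma reachable_of_inter_nonempty {i j : ι} (h : (f i ∩ f j).Nonempty) :
    (intersectionGraph f).Reachable i j := by
  rcases eq_or_ne i j with rfl | hij
  · rfl
  · exact Adj.reachable ((fromRel_adj _ i j).2 ⟨hij, Or.inl h⟩)

variable {G : SimpleGraph V}

lemma reachable_of_walk (hcover : ∀ v, ∃ i, insert v (G.neighborSet v) ⊆ f i)
    {x y : V} (p : G.Walk x y) {i j : ι} (hx : x ∈ f i) (hy : y ∈ f j) :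
    (intersectionGraph f).Reachable i j := by
  induction p generalizing i with
  | nil => exact reachable_of_inter_nonempty ⟨_, hx, hy⟩
  | @cons x z y hxz _ ih =>
    obtain ⟨k, hk⟩ := hcover z
    have hxk : x ∈ f k := hk (Set.mem_insert_of_mem _ hxz.symm)
    exact (reachable_of_inter_nonempty ⟨x, hx, hxk⟩).trans (ih (hk (Set.mem_insert z _)) hy)

lemma preconnected (hG : G.Preconnected) (hf : ∀ i, (f i).Nonempty)
    (hcover : ∀ v, ∃ i, insert v (G.neighborSet v) ⊆ f i) :
    (intersectionGraph f).Preconnected := fun i j =>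
  have ⟨x, hx⟩ := hf i
  have ⟨y, hy⟩ := hf j
  have ⟨p⟩ := hG x y
  reachable_of_walk hcover p hx hy

end intersectionGraph

theorem essential_vertex_graph_connected_general
    {V : Type*} [Fintype V] (G : SimpleGraph V) (hconn : G.Connected) :
    (SimpleGraph.fromRel
      (fun (u w : {v : V // ¬ ∃ x : V, x ≠ v ∧
          insert v (G.neighborSet v) ⊂ insert x (G.neighborSet x)}) =>
        (insert u.1 (G.neighborSet u.1) ∩ insert w.1 (G.neighborSet w.1)).Nonempty)).Connected := by
  have hcover (v : V) := exists_superset_not_ssubset (fun v => insert v (G.neighborSet v)) v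
  obtain ⟨v⟩ := hconn.nonempty
  obtain ⟨e, he, -⟩ := hcover v
  have : Nonempty {v : V // ¬ ∃ x : V, x ≠ v ∧
      insert v (G.neighborSet v) ⊂ insert x (G.neighborSet x)} := ⟨⟨e, he⟩⟩
  refine ⟨intersectionGraph.preconnected hconn.preconnected
    (fun u => ⟨u.1, Set.mem_insert _ _⟩) fun v => ?_⟩
  obtain ⟨e, he, hsub⟩ := hcover v
  exact ⟨⟨e, he⟩, hsub⟩

/-- The graph on essential vertices of a finite simple connected graph (with at least
two vertices), with edges given by intersecting closed stars, is connected. -/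
theorem essential_vertex_graph_connected
    {V : Type*} [Fintype V] (G : SimpleGraph V) (hconn : G.Connected)
    (h2 : 1 < Fintype.card V) :
    (SimpleGraph.fromRel
      (fun (u w : {v : V // ¬ ∃ x : V, x ≠ v ∧
          insert v (G.neighborSet v) ⊂ insert x (G.neighborSet x)}) =>
        (insert u.1 (G.neighborSet u.1) ∩ insert w.1 (G.neighborSet w.1)).Nonempty)).Connected :=
  essential_vertex_graph_connected_general G hconn
end

section
/- The group (F₂ × F₂) * (F₂ × F₂) is commensurable to (F₃ × F₂) * (F₂ × F₂) * (F₂ × F₂). -/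
open Monoid
namespace CommEx

abbrev F2 := FreeGroup (Fin 2)
abbrev F3 := FreeGroup (Fin 3)
abbrev FF := F2 × F2
abbrev G1 := Coprod FF FF
abbrev G2 := Coprod (F3 × F2) (Coprod FF FF)
abbrev C2 := Multiplicative (ZMod 2)

def a : F2 := FreeGroup.of 0
def b : F2 := FreeGroup.of 1
def τ : C2 := Multiplicative.ofAdd 1
def σ : F2 →* C2 := FreeGroup.lift (fun i => if i = 0 then τ else 1)
def π : G1 →* C2 := Coprod.lift (σ.comp (MonoidHom.fst F2 F2)) 1
def ι : F3 →* F2 := FreeGroup.lift ![a*a, b, a*b*a⁻¹]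
def t : G1 := Coprod.inl (a, 1)

def φA : F3 × F2 →* G1 := Coprod.inl.comp (ι.prodMap (MonoidHom.id F2))
def φC : FF →* G1 := (MulAut.conj t).toMonoidHom.comp Coprod.inr
def φ : G2 →* G1 := Coprod.lift φA (Coprod.lift Coprod.inr φC)

abbrev P := G2 × G2
def s : MulAut P := (MulEquiv.prodComm : P ≃* P)

lemma s_sq : s * s = 1 := by ext x <;> rfl

def sw : C2 →* MulAut P where
  toFun c := if c = 1 then 1 else s
  map_one' := if_pos rfl
  map_mul' x y := by
    rcases (by revert x; decide : x = 1 ∨ x = τ) with rfl | rfl <;>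
      rcases (by revert y; decide : y = 1 ∨ y = τ) with rfl | rfl <;>
      simp [(by decide : (τ:C2) * τ = 1), (by decide : (τ:C2) ≠ 1), s_sq]

@[simp] lemma sw_one : sw 1 = 1 := by simp [sw]
@[simp] lemma sw_tau : sw τ = s := by simp [sw, (by decide : (τ:C2) ≠ 1)]
@[simp] lemma s_apply (p : P) : s p = (p.2, p.1) := rfl

abbrev M := P ⋊[sw] C2

def inA : F3 × F2 →* G2 := Coprod.inl
def inB : FF →* G2 := Coprod.inr.comp Coprod.inl
def inC : FF →* G2 := Coprod.inr.comp Coprod.inr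

def x1 : G2 := inA (FreeGroup.of 0, 1)
def x2 : G2 := inA (FreeGroup.of 1, 1)
def x3 : G2 := inA (FreeGroup.of 2, 1)

def θX : F2 →* M := FreeGroup.lift ![⟨(1, x1), τ⟩, ⟨(x2, x3), 1⟩]
def jY : F2 →* F3 × F2 := MonoidHom.prod 1 (MonoidHom.id F2)
def θY : F2 →* M := SemidirectProduct.inl.comp ((inA.comp jY).prod (inA.comp jY))

@[simp] lemma θX_a : θX (FreeGroup.of 0) = ⟨(1, x1), τ⟩ := by simp [θX]
@[simp] lemma θX_b : θX (FreeGroup.of 1) = ⟨(x2, x3), 1⟩ := by simp [θX]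
@[simp] lemma θY_apply (y : F2) : θY y = SemidirectProduct.inl (inA (1, y), inA (1, y)) := rfl

end CommEx

namespace CommEx

@[simp] lemma pure_eq_of {α} (x : α) : (pure x : FreeGroup α) = FreeGroup.of x := rfl

lemma commA (w : F3) (y : F2) : Commute (inA (w, 1)) (inA (1, y)) := by
  have h : Commute ((w, 1) : F3 × F2) ((1, y) : F3 × F2) := by
    simp [Commute, SemiconjBy, Prod.ext_iff]
  exact h.map inA

lemma commXY : ∀ (x y : F2), Commute (θX x) (θY y) := by
  intro x y
  induction x using FreeGroup.induction_on with
  | C1 => simp only [map_one]; exact Commute.one_left _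
  | of i =>
    fin_cases i
    · show Commute _ _
      unfold Commute SemiconjBy
      ext <;>
        simp [SemidirectProduct.mul_left, SemidirectProduct.mul_right, x1,
          (commA (FreeGroup.of 0) y).eq]
    · show Commute _ _
      unfold Commute SemiconjBy
      ext <;>
        simp [SemidirectProduct.mul_left, SemidirectProduct.mul_right, Prod.ext_iff, x2, x3,
          (commA (FreeGroup.of 1) y).eq, (commA (FreeGroup.of 2) y).eq]
  | inv_of i h => rw [map_inv]; exact h.inv_left
  | mul u v hu hv => rw [map_mul]; exact hu.mul_left hv

def ΘA : FF →* M := MonoidHom.noncommCoprod θX θY commXY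
def ΘB : FF →* M := SemidirectProduct.inl.comp (inB.prod inC)
def Θ : G1 →* M := Coprod.lift ΘA ΘB

@[simp] lemma Θ_inl (m : FF) : Θ (Coprod.inl m) = θX m.1 * θY m.2 := rfl
@[simp] lemma Θ_inr (m : FF) :
    Θ (Coprod.inr m) = SemidirectProduct.inl (inB m, inC m) := rfl

@[simp] lemma φ_inl (m : F3 × F2) : φ (Coprod.inl m) = Coprod.inl (ι m.1, m.2) := rfl
@[simp] lemma φ_inB (m : FF) : φ (Coprod.inr (Coprod.inl m)) = Coprod.inr m := rfl
@[simp] lemma φ_inC (m : FF) :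
    φ (Coprod.inr (Coprod.inr m)) = t * Coprod.inr m * t⁻¹ := by
  simp [φ, φC, mul_assoc]

end CommEx

namespace CommEx

@[simp] lemma inB_apply (m : FF) : inB m = Coprod.inr (Coprod.inl m) := rfl
@[simp] lemma inC_apply (m : FF) : inC m = Coprod.inr (Coprod.inr m) := rfl
@[simp] lemma iota_0 : ι (FreeGroup.of 0) = a * a := by simp [ι]
@[simp] lemma iota_1 : ι (FreeGroup.of 1) = b := by simp [ι]
@[simp] lemma iota_2 : ι (FreeGroup.of 2) = a * b * a⁻¹ := by simp [ι]

lemma tau_sq : τ * τ = 1 := by decide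
lemma tau_inv : τ⁻¹ = τ := by decide
lemma c2_cases (c : C2) : c = 1 ∨ c = τ := by revert c; decide
noncomputable def r : C2 → G1 := fun c => if c = 1 then 1 else t
@[simp] lemma r_one : r 1 = 1 := if_pos rfl
@[simp] lemma r_tau : r τ = t := if_neg (by decide)
@[simp] lemma sigma_a : σ a = τ := by simp [σ, a]
@[simp] lemma sigma_b : σ b = 1 := by simp [σ, b]
@[simp] lemma pi_inl (m : FF) : π (Coprod.inl m) = σ m.1 := rfl
@[simp] lemma pi_inr (m : FF) : π (Coprod.inr m) = 1 := rfl

def Q (g : G1) : Prop :=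
  φ (Θ g).left.1 = g * (r (π g))⁻¹ ∧
  φ (Θ g).left.2 = t * g * (r (π g * τ))⁻¹ ∧
  (Θ g).right = π g

lemma Q_one : Q 1 := by
  refine ⟨?_, ?_, ?_⟩ <;> simp [Q]

lemma Q_mul {g h : G1} (hg : Q g) (hh : Q h) : Q (g * h) := by
  obtain ⟨hg1, hg2, hg3⟩ := hg
  obtain ⟨hh1, hh2, hh3⟩ := hh
  have h3 : (Θ (g * h)).right = π (g * h) := by
    rw [map_mul, SemidirectProduct.mul_right, hg3, hh3, map_mul]
  refine ⟨?_, ?_, h3⟩ <;>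
  · rw [map_mul π, map_mul Θ, SemidirectProduct.mul_left, hg3]
    rcases c2_cases (π g) with e | e <;> rcases c2_cases (π h) with e' | e' <;>
      simp only [e, e', map_mul, sw_one, sw_tau, MulAut.one_apply, s_apply,
        Prod.fst_mul, Prod.snd_mul, hg1, hg2, hh1, hh2, one_mul, mul_one,
        tau_sq, r_one, r_tau, inv_one] <;>
      group

lemma Q_inv {g : G1} (hg : Q g) : Q g⁻¹ := by
  obtain ⟨hg1, hg2, hg3⟩ := hg
  have h3 : (Θ g⁻¹).right = π g⁻¹ := by
    rw [map_inv, map_inv, SemidirectProduct.inv_right, hg3]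
  refine ⟨?_, ?_, h3⟩ <;>
  · rw [map_inv π, map_inv Θ, SemidirectProduct.inv_left, hg3]
    rcases c2_cases (π g) with e | e <;>
      simp only [e, map_inv, map_mul, inv_one, tau_inv, sw_one, sw_tau,
        MulAut.one_apply, s_apply, Prod.fst_inv, Prod.snd_inv, Prod.fst_mul, Prod.snd_mul,
        hg1, hg2, one_mul, mul_one, tau_sq, r_one, r_tau] <;>
      group

end CommEx

namespace CommEx

@[simp] lemma sigma_of0 : σ (FreeGroup.of (0 : Fin 2)) = τ := by simp [σ]
@[simp] lemma sigma_of1 : σ (FreeGroup.of (1 : Fin 2)) = 1 := by simp [σ]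

lemma Q_inl_snd (y : F2) : Q (Coprod.inl ((1 : F2), y)) := by
  have ht : t * Coprod.inl ((1 : F2), y) * t⁻¹ = Coprod.inl ((1 : F2), y) := by
    rw [t, ← map_inv, ← map_mul, ← map_mul]
    norm_num
  refine ⟨?_, ?_, ?_⟩ <;>
    simp [Q, jY, θY, ht, inA]

lemma Q_inl_gen (i : Fin 2) : Q (Coprod.inl (FreeGroup.of i, (1 : F2))) := by
  fin_cases i
  · refine ⟨?_, ?_, ?_⟩ <;>
      simp [Q, a, x1, inA, t, tau_sq, ← map_mul, ← map_inv] <;> norm_num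
  · refine ⟨?_, ?_, ?_⟩ <;>
      simp [Q, b, x2, x3, inA, ← map_mul, ← map_inv] <;>
      · rw [t, ← map_inv, ← map_mul, ← map_mul]; norm_num

lemma Q_inl_fst (x : F2) : Q (Coprod.inl (x, (1 : F2))) := by
  induction x using FreeGroup.induction_on with
  | C1 =>
    have : (Coprod.inl ((1:F2), (1:F2)) : G1) = 1 := map_one _
    rw [this]; exact Q_one
  | of i => exact Q_inl_gen i
  | inv_of i h =>
    have : (Coprod.inl ((FreeGroup.of i)⁻¹, (1:F2)) : G1)
        = (Coprod.inl (FreeGroup.of i, (1:F2)) : G1)⁻¹ := by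
      rw [← map_inv]; norm_num
    rw [this]; exact Q_inv h
  | mul u v hu hv =>
    have : (Coprod.inl (u * v, (1:F2)) : G1)
        = Coprod.inl (u, (1:F2)) * Coprod.inl (v, (1:F2)) := by
      rw [← map_mul]; norm_num
    rw [this]; exact Q_mul hu hv

lemma Q_inr (m : FF) : Q (Coprod.inr m) := by
  refine ⟨?_, ?_, ?_⟩ <;> simp [Q]

lemma Q_all (g : G1) : Q g := by
  induction g using Coprod.induction_on with
  | inl m =>
    have : (Coprod.inl m : G1) = Coprod.inl (m.1, (1:F2)) * Coprod.inl ((1:F2), m.2) := by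
      rw [← map_mul]; simp
    rw [this]; exact Q_mul (Q_inl_fst m.1) (Q_inl_snd m.2)
  | inr m => exact Q_inr m
  | mul u v hu hv => exact Q_mul hu hv

end CommEx

namespace CommEx

lemma sigma_iota (w : F3) : σ (ι w) = 1 := by
  induction w using FreeGroup.induction_on with
  | C1 => simp
  | of i => fin_cases i <;> simp [tau_sq, tau_inv]
  | inv_of i h => rw [map_inv, map_inv, h]; simp
  | mul u v hu hv => rw [map_mul, map_mul, hu, hv]; simp

lemma pi_phi (x : G2) : π (φ x) = 1 := by
  induction x using Coprod.induction_on with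
  | inl m => simp [sigma_iota]
  | inr m =>
    induction m using Coprod.induction_on with
    | inl mm => simp
    | inr mm => simp [t, tau_sq, tau_inv]
    | mul u v hu hv => simp only [map_mul, hu, hv, mul_one]
  | mul u v hu hv => simp only [map_mul, hu, hv, mul_one]

@[simp] lemma inA_mk_mul (u v : F3) :
    inA (u * v, (1:F2)) = inA (u, 1) * inA (v, 1) := by
  rw [← map_mul]; norm_num

@[simp] lemma inA_mk_inv (u : F3) : inA (u⁻¹, (1:F2)) = (inA (u, 1))⁻¹ := by
  rw [show ((u⁻¹, (1:F2)) : F3 × F2) = ((u, (1:F2)))⁻¹ by simp, map_inv]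

def κ : F3 →* F3 :=
  FreeGroup.lift ![FreeGroup.of 0, FreeGroup.of 2,
    FreeGroup.of 0 * FreeGroup.of 1 * (FreeGroup.of 0)⁻¹]

lemma θX_iota (w : F3) :
    θX (ι w) = SemidirectProduct.inl (inA (w, 1), inA (κ w, 1)) := by
  have key : θX.comp ι = SemidirectProduct.inl.comp
      ((inA.comp (MonoidHom.prod (MonoidHom.id F3) 1)).prod
        ((inA.comp (MonoidHom.prod (MonoidHom.id F3) 1)).comp κ)) := by
    apply FreeGroup.ext_hom
    intro i
    fin_cases i <;>
      · ext <;>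
          · simp [κ, a, b, x1, x2, x3, map_mul, map_inv, SemidirectProduct.mul_left,
              SemidirectProduct.mul_right, SemidirectProduct.inv_left,
              SemidirectProduct.inv_right, tau_sq, tau_inv]
            try group
  have := DFunLike.congr_fun key w
  simpa using this

lemma Θ_t : Θ t = θX a := by
  simp [t, Prod.mk_one_one]

lemma left_fst_phi (g : G2) : (Θ (φ g)).left.1 = g := by
  induction g using Coprod.induction_on with
  | inl m =>
    show (Θ (Coprod.inl (ι m.1, m.2))).left.1 = _
    rw [Θ_inl]
    simp only [θX_iota, θY_apply, SemidirectProduct.mul_left, SemidirectProduct.mul_right,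
      SemidirectProduct.left_inl, SemidirectProduct.right_inl, sw_one, one_mul,
      MulAut.one_apply, Prod.fst_mul]
    rw [← map_mul]
    norm_num [inA]
  | inr m =>
    induction m using Coprod.induction_on with
    | inl mm => simp
    | inr mm =>
      rw [φ_inC, map_mul, map_mul, map_inv, Θ_t, Θ_inr]
      simp [a, tau_inv, SemidirectProduct.mul_left, SemidirectProduct.mul_right,
        SemidirectProduct.inv_left, SemidirectProduct.inv_right]
    | mul u v hu hv =>
      rw [map_mul, map_mul, map_mul, SemidirectProduct.mul_left, (Q_all (φ (Coprod.inr u))).2.2,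
        pi_phi, sw_one, MulAut.one_apply, Prod.fst_mul, hu, hv]
  | mul u v hu hv =>
    rw [map_mul, map_mul, SemidirectProduct.mul_left, (Q_all (φ u)).2.2,
      pi_phi, sw_one, MulAut.one_apply, Prod.fst_mul, hu, hv]

end CommEx

namespace CommEx

lemma phi_injective : Function.Injective φ := by
  intro g h e
  have hg := left_fst_phi g
  have hh := left_fst_phi h
  rw [e] at hg
  exact hg.symm.trans hh

end CommEx

/-- `(F₂ × F₂) * (F₂ × F₂)` is commensurable to `(F₃ × F₂) * (F₂ × F₂) * (F₂ × F₂)`. -/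
theorem commensurable_example :
    ∃ (H₁ : Subgroup (Monoid.Coprod (FreeGroup (Fin 2) × FreeGroup (Fin 2))
        (FreeGroup (Fin 2) × FreeGroup (Fin 2))))
      (H₂ : Subgroup (Monoid.Coprod (FreeGroup (Fin 3) × FreeGroup (Fin 2))
        (Monoid.Coprod (FreeGroup (Fin 2) × FreeGroup (Fin 2))
          (FreeGroup (Fin 2) × FreeGroup (Fin 2))))),
      H₁.index ≠ 0 ∧ H₂.index ≠ 0 ∧ Nonempty (H₁ ≃* H₂) := by
  refine ⟨CommEx.π.ker, ⊤, ?_, ?_, ?_⟩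
  · rw [Subgroup.index_ker]
    exact Nat.card_pos.ne'
  · simp
  · have hmem : ∀ x, CommEx.φ x ∈ CommEx.π.ker := fun x => CommEx.pi_phi x
    set ψ := CommEx.φ.codRestrict CommEx.π.ker hmem with hψ
    have hinj : Function.Injective ψ := fun x y h =>
      CommEx.phi_injective (congrArg Subtype.val h)
    have hsurj : Function.Surjective ψ := by
      rintro ⟨k, hk⟩
      refine ⟨(CommEx.Θ k).left.1, ?_⟩
      have h1 := (CommEx.Q_all k).1
      rw [MonoidHom.mem_ker] at hk
      rw [hk] at h1
      apply Subtype.ext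
      simpa [hψ] using h1
    exact ⟨(MulEquiv.ofBijective ψ ⟨hinj, hsurj⟩).symm.trans Subgroup.topEquiv.symm⟩
end
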